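/- Let n ≥ 1 be an integer and let (a, b, c) ∈ ℤ³ satisfy b² − 4ac = 4n. Suppose that each of the three rescaled points (a/(2√n), b/(2√n), c/(2√n)), the rescaling of T(a, b, c) = (a, b + 2a, a + b + c) by 1/(2√n), and the rescaling of U(a, b, c) = (c, −b + 2c, a − b + c) by 1/(2√n) lies in K := {(A, B, C) ∈ ℝ³ : B² − 4AC = 1, |A − C| < 1, |B| < 1, |A + C| < 1}. Then there exist integers x, y, z with x² + y² − z² = n and max(x², y², z²) < n. -/

import Mathlib

/-!
Since `b² ≡ 4ac (mod 4)`, `b` is even, and then one of `(a,b,c)`, `T(a,b,c)`, `U(a,b,c)` also has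
`a + c` even. For that triple `x = (a − c)/2`, `y = b/2`, `z = (a + c)/2` are integers with
`x² + y² − z² = (b² − 4ac)/4 = n`, and membership of the rescaled triple in `K` bounds `|a − c|`,
`|b|`, `|a + c|` by `2√n`, i.e. `|x|, |y|, |z| < √n`.
-/

/-- The one-sheeted hyperboloid `V = {(A,B,C) : B² − 4AC = 1}` in `ℝ³`. -/
def hypV : Set (ℝ × ℝ × ℝ) := {p | p.2.1 ^ 2 - 4 * p.1 * p.2.2 = 1}

/-- The open patch `K` of the hyperboloid. -/
def patchK : Set (ℝ × ℝ × ℝ) :=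
  {p | p ∈ hypV ∧ |p.1 - p.2.2| < 1 ∧ |p.2.1| < 1 ∧ |p.1 + p.2.2| < 1}

lemma sq_lt_sq_of_abs_div_lt_one {s t : ℝ} (hs : 0 < s) (h : |t / s| < 1) : t ^ 2 < s ^ 2 := by
  rw [abs_div, abs_of_pos hs, div_lt_one hs] at h
  exact sq_lt_sq.2 (by rwa [abs_of_pos hs])

lemma sq_lt_sq_of_div_mem_patchK {s A B C : ℝ} (hs : 0 < s) (h : (A / s, B / s, C / s) ∈ patchK) :
    (A - C) ^ 2 < s ^ 2 ∧ B ^ 2 < s ^ 2 ∧ (A + C) ^ 2 < s ^ 2 := by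
  obtain ⟨-, hAC, hB, hAC'⟩ := h
  rw [div_sub_div_same] at hAC
  rw [← add_div] at hAC'
  exact ⟨sq_lt_sq_of_abs_div_lt_one hs hAC, sq_lt_sq_of_abs_div_lt_one hs hB,
    sq_lt_sq_of_abs_div_lt_one hs hAC'⟩

lemma two_dvd_of_sq_sub_four_mul_eq {a b c n : ℤ} (h : b ^ 2 - 4 * a * c = 4 * n) : 2 ∣ b :=
  Int.prime_two.dvd_of_dvd_pow (n := 2) ⟨2 * n + 2 * (a * c), by linarith⟩

lemma exists_sq_add_sq_sub_sq_eq_of_two_dvd {a b c n : ℤ} (hd : b ^ 2 - 4 * a * c = 4 * n)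
    (hb : 2 ∣ b) (hac : 2 ∣ a + c) (h₁ : (a - c) ^ 2 < 4 * n) (h₂ : b ^ 2 < 4 * n)
    (h₃ : (a + c) ^ 2 < 4 * n) :
    ∃ x y z : ℤ, x ^ 2 + y ^ 2 - z ^ 2 = n ∧ max (x ^ 2) (max (y ^ 2) (z ^ 2)) < n := by
  obtain ⟨y, rfl⟩ := hb
  obtain ⟨z, hz⟩ := hac
  obtain rfl : a = 2 * z - c := by omega
  refine ⟨z - c, y, z, by linarith, max_lt ?_ (max_lt ?_ ?_)⟩ <;> nlinarith

lemma exists_sq_add_sq_sub_sq_eq_of_mem_patchK {a b c n : ℤ} (hn : 1 ≤ n)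
    (hd : b ^ 2 - 4 * a * c = 4 * n) (hb : 2 ∣ b) (hac : 2 ∣ a + c)
    (hK : (((a : ℝ) / (2 * Real.sqrt n), (b : ℝ) / (2 * Real.sqrt n),
        (c : ℝ) / (2 * Real.sqrt n)) : ℝ × ℝ × ℝ) ∈ patchK) :
    ∃ x y z : ℤ, x ^ 2 + y ^ 2 - z ^ 2 = n ∧ max (x ^ 2) (max (y ^ 2) (z ^ 2)) < n := by
  have hn' : (0 : ℝ) < n := by exact_mod_cast hn
  have hs : (2 * Real.sqrt n) ^ 2 = 4 * (n : ℝ) := by rw [mul_pow, Real.sq_sqrt hn'.le]; norm_num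
  obtain ⟨h₁, h₂, h₃⟩ := sq_lt_sq_of_div_mem_patchK (by positivity) hK
  rw [hs] at h₁ h₂ h₃
  exact exists_sq_add_sq_sub_sq_eq_of_two_dvd hd hb hac (by exact_mod_cast h₁)
    (by exact_mod_cast h₂) (by exact_mod_cast h₃)

/-- Combined deduction in the proof of the main theorem: if `(a,b,c)` has discriminant `4n`
and the rescalings by `1/(2√n)` of all three triples `(a,b,c)`, `T(a,b,c)`, `U(a,b,c)`
lie in `K`, then `n = x² + y² − z²` with `max(x², y², z²) < n`. -/
theorem representation_from_patch (n : ℤ) (hn : 1 ≤ n) (a b c : ℤ)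
    (hdisc : b ^ 2 - 4 * a * c = 4 * n)
    (hK : (((a : ℝ) / (2 * Real.sqrt n), (b : ℝ) / (2 * Real.sqrt n),
        (c : ℝ) / (2 * Real.sqrt n)) : ℝ × ℝ × ℝ) ∈ patchK)
    (hKT : (((a : ℝ) / (2 * Real.sqrt n), ((b : ℝ) + 2 * a) / (2 * Real.sqrt n),
        ((a : ℝ) + b + c) / (2 * Real.sqrt n)) : ℝ × ℝ × ℝ) ∈ patchK)
    (hKU : (((c : ℝ) / (2 * Real.sqrt n), (-(b : ℝ) + 2 * c) / (2 * Real.sqrt n),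
        ((a : ℝ) - b + c) / (2 * Real.sqrt n)) : ℝ × ℝ × ℝ) ∈ patchK) :
    ∃ x y z : ℤ, x ^ 2 + y ^ 2 - z ^ 2 = n ∧
      max (x ^ 2) (max (y ^ 2) (z ^ 2)) < n := by
  have hb := two_dvd_of_sq_sub_four_mul_eq hdisc
  have hparity : 2 ∣ a + c ∨ 2 ∣ a + (a + b + c) ∨ 2 ∣ c + (a - b + c) := by omega
  rcases hparity with hac | hT | hU
  · exact exists_sq_add_sq_sub_sq_eq_of_mem_patchK hn hdisc hb hac hK
  · exact exists_sq_add_sq_sub_sq_eq_of_mem_patchK (b := b + 2 * a) hn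
      (by linear_combination hdisc) (by omega) hT (by push_cast; exact hKT)
  · exact exists_sq_add_sq_sub_sq_eq_of_mem_patchK (b := -b + 2 * c) hn
      (by linear_combination hdisc) (by omega) hU (by push_cast; exact hKU)
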